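/- Let a < b be real numbers, n ≥ 1, H : ℝⁿ → ℝ be continuously differentiable with partial derivatives H'_1, …, H'_n, and for i = 1, …, n let f_i : [a,b] × ℝ × ℝ → ℝ be continuous with continuous partial derivatives f_{iy} and f_{iv} with respect to its second and third arguments. Suppose x̃ : [a,b] → ℝ is C¹ with x̃(b) = x_b (the value x(a) is not specified), and x̃ is a weak local extremizer of L[x] = H(F_1[x], …, F_n[x]): there exists δ > 0 such that L[x̃] ≤ L[x] for every C¹ function x : [a,b] → ℝ with x(b) = x_b and ‖x − x̃‖₁ < δ (or L[x̃] ≥ L[x] for all such x). Then the natural boundary condition ∑_{i=1}^{n} H'_i(F_1[x̃], …, F_n[x̃]) · f_{iv}(a, x̃(a), x̃'(a)) = 0 holds. -/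

import Mathlib

/-!
Varying `xE` by `ε η` with `η` of class C¹ and `η b = 0` respects the constraint at `b` and
has C¹-norm `|ε| ‖η‖₁`, so `ε ↦ L[xE + ε η]` has a local extremum at `0`. Differentiating under
the integral sign and through `H` gives `∫ₐᵇ (g η + h η') = 0`, where `g = ∑ H'_i f_{iy}` and
`h = ∑ H'_i f_{iv}` are evaluated along `xE`. For the variation with `η' = h - ∫ₐᵗ g` and
`η b = 0`, an integration by parts turns this into `∫ₐᵇ (h - ∫ₐᵗ g)² = 0`; hence
`h t = ∫ₐᵗ g` on `[a, b]`, and `h a = 0` is the natural boundary condition.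
-/

/-- The C¹-norm ‖x‖₁ = sup_{t∈[a,b]} |x(t)| + sup_{t∈[a,b]} |x'(t)|. -/
noncomputable def C1Norm (a b : ℝ) (x : ℝ → ℝ) : ℝ :=
  (⨆ t : Set.Icc a b, |x t|) + (⨆ t : Set.Icc a b, |derivWithin x (Set.Icc a b) t|)

open Set Filter Topology MeasureTheory

theorem hasDerivAt_comp_add_mul_of_hasDerivAt_partial {g gy gv : ℝ → ℝ → ℝ}
    (hgy : ∀ y v, HasDerivAt (g · v) (gy y v) y) (hgv : ∀ y v, HasDerivAt (g y ·) (gv y v) v)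
    (hgy_cont : Continuous (Function.uncurry gy)) (hgv_cont : Continuous (Function.uncurry gv))
    (y v A B ε : ℝ) :
    HasDerivAt (fun ε => g (y + ε * A) (v + ε * B))
      (gy (y + ε * A) (v + ε * B) * A + gv (y + ε * A) (v + ε * B) * B) ε := by
  set u : ℝ × ℝ := (y + ε * A, v + ε * B)
  have hstrict := hasStrictFDerivAt_uncurry_coprod (u := u)
    (f₁ := fun y v => (1 : ℝ →L[ℝ] ℝ).smulRight (gy y v))
    (f₂ := fun y v => (1 : ℝ →L[ℝ] ℝ).smulRight (gv y v))
    (Eventually.of_forall fun w => (hgy w.1 w.2).hasFDerivAt)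
    (Eventually.of_forall fun w => (hgv w.1 w.2).hasFDerivAt)
    ((ContinuousLinearMap.smulRightL ℝ ℝ ℝ 1).continuous.comp hgy_cont).continuousAt
    ((ContinuousLinearMap.smulRightL ℝ ℝ ℝ 1).continuous.comp hgv_cont).continuousAt
  have hline : HasDerivAt (fun ε => (y + ε * A, v + ε * B)) (A, B) ε :=
    (((hasDerivAt_id ε).mul_const A).const_add y).prodMk
      (((hasDerivAt_id ε).mul_const B).const_add v) |>.congr_deriv (by simp)
  refine (hstrict.hasFDerivAt.comp_hasDerivAt ε hline).congr_deriv ?_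
  simp [u, Function.HasUncurry.uncurry, mul_comm]

theorem hasDerivAt_comp_pi {ι : Type*} [Fintype ι] [DecidableEq ι] {H : (ι → ℝ) → ℝ}
    {φ : ℝ → ι → ℝ} {φ' : ι → ℝ} {s : ℝ} (hH : DifferentiableAt ℝ H (φ s))
    (hφ : ∀ i, HasDerivAt (fun ε => φ ε i) (φ' i) s) :
    HasDerivAt (fun ε => H (φ ε)) (∑ i, fderiv ℝ H (φ s) (Pi.single i 1) * φ' i) s := by
  refine (hH.hasFDerivAt.comp_hasDerivAt s (hasDerivAt_pi.2 hφ)).congr_deriv ?_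
  conv_lhs => rw [← Finset.univ_sum_single φ']
  rw [map_sum]
  refine Finset.sum_congr rfl fun i _ => ?_
  rw [mul_comm, ← smul_eq_mul, ← map_smul, ← Pi.single_smul', smul_eq_mul, mul_one]

section Variation

variable {a b : ℝ} {f fy fv : ℝ → ℝ → ℝ → ℝ}

theorem ContinuousOn.comp_triple {X : Type*} [TopologicalSpace X] {s : Set X}
    (hf : ContinuousOn (fun p : ℝ × ℝ × ℝ => f p.1 p.2.1 p.2.2) (Icc a b ×ˢ univ ×ˢ univ))
    {τ y v : X → ℝ} (hτ : ContinuousOn τ s) (hτs : MapsTo τ s (Icc a b))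
    (hy : ContinuousOn y s) (hv : ContinuousOn v s) :
    ContinuousOn (fun z => f (τ z) (y z) (v z)) s :=
  hf.comp (hτ.prodMk (hy.prodMk hv)) fun _ hz => ⟨hτs hz, trivial, trivial⟩

theorem hasDerivAt_intervalIntegral_add_mul (hab : a ≤ b)
    (hf : ContinuousOn (fun p : ℝ × ℝ × ℝ => f p.1 p.2.1 p.2.2) (Icc a b ×ˢ univ ×ˢ univ))
    (hfy : ∀ t ∈ Icc a b, ∀ y v : ℝ, HasDerivAt (fun y' => f t y' v) (fy t y v) y)
    (hfv : ∀ t ∈ Icc a b, ∀ y v : ℝ, HasDerivAt (fun v' => f t y v') (fv t y v) v)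
    (hfy_cont : ContinuousOn (fun p : ℝ × ℝ × ℝ => fy p.1 p.2.1 p.2.2) (Icc a b ×ˢ univ ×ˢ univ))
    (hfv_cont : ContinuousOn (fun p : ℝ × ℝ × ℝ => fv p.1 p.2.1 p.2.2) (Icc a b ×ˢ univ ×ˢ univ))
    {x p η w : ℝ → ℝ}
    (hx : ContinuousOn x (Icc a b)) (hp : ContinuousOn p (Icc a b))
    (hη : ContinuousOn η (Icc a b)) (hw : ContinuousOn w (Icc a b)) :
    HasDerivAt (fun ε => ∫ t in a..b, f t (x t + ε * η t) (p t + ε * w t))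
      (∫ t in a..b, (fy t (x t) (p t) * η t + fv t (x t) (p t) * w t)) 0 := by
  set F' : ℝ → ℝ → ℝ := fun ε t =>
    fy t (x t + ε * η t) (p t + ε * w t) * η t + fv t (x t + ε * η t) (p t + ε * w t) * w t
  have hIoc : uIoc a b ⊆ Icc a b := by rw [uIoc_of_le hab]; exact Ioc_subset_Icc_self
  have hF : ∀ ε, ContinuousOn (fun t => f t (x t + ε * η t) (p t + ε * w t)) (Icc a b) :=
    fun ε => hf.comp_triple continuousOn_id (mapsTo_id _) (hx.add (continuousOn_const.mul hη))
      (hp.add (continuousOn_const.mul hw))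
  have hF' : ContinuousOn ↿F' (Icc (-1) 1 ×ˢ Icc a b) := by
    have hsnd : MapsTo Prod.snd (Icc (-1 : ℝ) 1 ×ˢ Icc a b) (Icc a b) := fun _ hq => hq.2
    have hcomp {u : ℝ → ℝ} (hu : ContinuousOn u (Icc a b)) :
        ContinuousOn (fun q : ℝ × ℝ => u q.2) (Icc (-1) 1 ×ˢ Icc a b) :=
      hu.comp continuousOn_snd hsnd
    have hy := (hcomp hx).add (continuousOn_fst.mul (hcomp hη))
    have hv := (hcomp hp).add (continuousOn_fst.mul (hcomp hw))
    exact ((hfy_cont.comp_triple continuousOn_snd hsnd hy hv).mul (hcomp hη)).add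
      ((hfv_cont.comp_triple continuousOn_snd hsnd hy hv).mul (hcomp hw))
  obtain ⟨C, hC⟩ := (isCompact_Icc.prod isCompact_Icc).exists_bound_of_continuousOn hF'
  have hF'0 : ContinuousOn (F' 0) (Icc a b) :=
    hF'.comp (continuousOn_const.prodMk continuousOn_id) fun t ht => ⟨by norm_num, ht⟩
  have key := intervalIntegral.hasDerivAt_integral_of_dominated_loc_of_deriv_le
    (μ := volume) (F' := F') (bound := fun _ => C) (Ioo_mem_nhds (neg_lt_zero.2 one_pos) one_pos)
    (Eventually.of_forall fun ε => ((hF ε).mono hIoc).aestronglyMeasurable measurableSet_uIoc)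
    ((hF 0).intervalIntegrable_of_Icc hab)
    ((hF'0.mono hIoc).aestronglyMeasurable measurableSet_uIoc)
    (ae_of_all _ fun t ht ε hε => hC (ε, t) ⟨Ioo_subset_Icc_self hε, hIoc ht⟩)
    intervalIntegrable_const
    (ae_of_all _ fun t ht ε _ =>
      have htI := hIoc ht
      hasDerivAt_comp_add_mul_of_hasDerivAt_partial (hfy t htI) (hfv t htI)
        (hfy_cont.comp_continuous (continuous_const.prodMk continuous_id)
          fun _ => ⟨htI, trivial, trivial⟩)
        (hfv_cont.comp_continuous (continuous_const.prodMk continuous_id)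
          fun _ => ⟨htI, trivial, trivial⟩) _ _ _ _ ε)
  simpa [F'] using key.2

theorem hasDerivAt_intervalIntegral_variation (hab : a < b)
    (hf : ContinuousOn (fun p : ℝ × ℝ × ℝ => f p.1 p.2.1 p.2.2) (Icc a b ×ˢ univ ×ˢ univ))
    (hfy : ∀ t ∈ Icc a b, ∀ y v : ℝ, HasDerivAt (fun y' => f t y' v) (fy t y v) y)
    (hfv : ∀ t ∈ Icc a b, ∀ y v : ℝ, HasDerivAt (fun v' => f t y v') (fv t y v) v)
    (hfy_cont : ContinuousOn (fun p : ℝ × ℝ × ℝ => fy p.1 p.2.1 p.2.2) (Icc a b ×ˢ univ ×ˢ univ))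
    (hfv_cont : ContinuousOn (fun p : ℝ × ℝ × ℝ => fv p.1 p.2.1 p.2.2) (Icc a b ×ˢ univ ×ˢ univ))
    {x η : ℝ → ℝ}
    (hx : ContDiffOn ℝ 1 x (Icc a b)) (hη : ContDiff ℝ 1 η) :
    HasDerivAt (fun ε => ∫ t in a..b,
        f t (x t + ε * η t) (derivWithin (fun t => x t + ε * η t) (Icc a b) t))
      (∫ t in a..b, (fy t (x t) (derivWithin x (Icc a b) t) * η t +
        fv t (x t) (derivWithin x (Icc a b) t) * deriv η t)) 0 := by
  have hderiv : ∀ ε, ∀ t ∈ Icc a b, derivWithin (fun t => x t + ε * η t) (Icc a b) t =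
      derivWithin x (Icc a b) t + ε * deriv η t := fun ε t ht =>
    ((hx.differentiableOn one_ne_zero t ht).hasDerivWithinAt.add
      ((hη.differentiable one_ne_zero t).hasDerivAt.const_mul ε).hasDerivWithinAt).derivWithin
      (uniqueDiffOn_Icc hab t ht)
  refine (hasDerivAt_intervalIntegral_add_mul hab.le hf hfy hfv hfy_cont hfv_cont hx.continuousOn
    (hx.continuousOn_derivWithin (uniqueDiffOn_Icc hab) le_rfl) hη.continuous.continuousOn
    (hη.continuous_deriv le_rfl).continuousOn).congr_of_eventuallyEq
    (Eventually.of_forall fun ε => intervalIntegral.integral_congr fun t ht => ?_)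
  rw [uIcc_of_le hab.le] at ht
  simp only [hderiv ε t ht]

end Variation

theorem C1Norm_const_mul {a b : ℝ} (c : ℝ) {x : ℝ → ℝ} (hx : DifferentiableOn ℝ x (Icc a b)) :
    C1Norm a b (fun t => c * x t) = |c| * C1Norm a b x := by
  unfold C1Norm
  rw [mul_add, Real.mul_iSup_of_nonneg (abs_nonneg c), Real.mul_iSup_of_nonneg (abs_nonneg c)]
  congr 1 <;> refine iSup_congr fun t => ?_
  · rw [abs_mul]
  · rw [derivWithin_const_mul c (hx t t.2), abs_mul]

theorem isLocalExtr_comp_add_mul {a b xb : ℝ} {L : (ℝ → ℝ) → ℝ} {xE η : ℝ → ℝ}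
    (hxE : ContDiffOn ℝ 1 xE (Icc a b)) (hxEb : xE b = xb) (hη : ContDiff ℝ 1 η) (hηb : η b = 0)
    (hext :
      (∃ δ > 0, ∀ x : ℝ → ℝ, ContDiffOn ℝ 1 x (Icc a b) →
        x b = xb → C1Norm a b (fun t => x t - xE t) < δ → L xE ≤ L x) ∨
      (∃ δ > 0, ∀ x : ℝ → ℝ, ContDiffOn ℝ 1 x (Icc a b) →
        x b = xb → C1Norm a b (fun t => x t - xE t) < δ → L x ≤ L xE)) :
    IsLocalExtr (fun ε => L fun t => xE t + ε * η t) 0 := by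
  have hadm : ∀ ε : ℝ, ContDiffOn ℝ 1 (fun t => xE t + ε * η t) (Icc a b) ∧
      xE b + ε * η b = xb :=
    fun ε => ⟨hxE.add (contDiff_const.mul hη).contDiffOn, by simp [hxEb, hηb]⟩
  have hnear : ∀ δ > 0, ∀ᶠ ε in 𝓝 (0 : ℝ),
      C1Norm a b (fun t => (xE t + ε * η t) - xE t) < δ := by
    intro δ hδ
    simp only [add_sub_cancel_left,
      C1Norm_const_mul _ (hη.differentiable one_ne_zero).differentiableOn]
    have hlim : Tendsto (fun ε : ℝ => |ε| * C1Norm a b η) (𝓝 0) (𝓝 0) := by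
      have hcont : Continuous fun ε : ℝ => |ε| * C1Norm a b η := by fun_prop
      simpa using hcont.tendsto 0
    exact hlim.eventually (gt_mem_nhds hδ)
  rcases hext with ⟨δ, hδ, hmin⟩ | ⟨δ, hδ, hmax⟩
  · refine Or.inl ((hnear δ hδ).mono fun ε hε => ?_)
    simpa using hmin _ (hadm ε).1 (hadm ε).2 hε
  · refine Or.inr ((hnear δ hδ).mono fun ε hε => ?_)
    simpa using hmax _ (hadm ε).1 (hadm ε).2 hε

theorem integral_first_variation_eq_zero {a b : ℝ} (hab : a < b) {n : ℕ}
    {H : (Fin n → ℝ) → ℝ} {f fy fv : Fin n → ℝ → ℝ → ℝ → ℝ}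
    (hf_cont : ∀ i, ContinuousOn (fun p : ℝ × ℝ × ℝ => f i p.1 p.2.1 p.2.2)
      (Icc a b ×ˢ univ ×ˢ univ))
    (hfy : ∀ i, ∀ t ∈ Icc a b, ∀ y v : ℝ, HasDerivAt (fun y' => f i t y' v) (fy i t y v) y)
    (hfv : ∀ i, ∀ t ∈ Icc a b, ∀ y v : ℝ, HasDerivAt (fun v' => f i t y v') (fv i t y v) v)
    (hfy_cont : ∀ i, ContinuousOn (fun p : ℝ × ℝ × ℝ => fy i p.1 p.2.1 p.2.2)
      (Icc a b ×ˢ univ ×ˢ univ))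
    (hfv_cont : ∀ i, ContinuousOn (fun p : ℝ × ℝ × ℝ => fv i p.1 p.2.1 p.2.2)
      (Icc a b ×ˢ univ ×ˢ univ))
    {xb : ℝ} {xE : ℝ → ℝ} (hxE : ContDiffOn ℝ 1 xE (Icc a b)) (hxEb : xE b = xb)
    {F : (ℝ → ℝ) → Fin n → ℝ}
    (hF : ∀ x i, F x i = ∫ t in a..b, f i t (x t) (derivWithin x (Icc a b) t))
    (hH : DifferentiableAt ℝ H (F xE)) {L : (ℝ → ℝ) → ℝ} (hL : ∀ x, L x = H (F x))
    (hext :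
      (∃ δ > 0, ∀ x : ℝ → ℝ, ContDiffOn ℝ 1 x (Icc a b) →
        x b = xb → C1Norm a b (fun t => x t - xE t) < δ → L xE ≤ L x) ∨
      (∃ δ > 0, ∀ x : ℝ → ℝ, ContDiffOn ℝ 1 x (Icc a b) →
        x b = xb → C1Norm a b (fun t => x t - xE t) < δ → L x ≤ L xE))
    {η : ℝ → ℝ} (hη : ContDiff ℝ 1 η) (hηb : η b = 0) :
    ∫ t in a..b,
      ((∑ i, fderiv ℝ H (F xE) (Pi.single i 1) * fy i t (xE t) (derivWithin xE (Icc a b) t)) *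
          η t +
        (∑ i, fderiv ℝ H (F xE) (Pi.single i 1) * fv i t (xE t) (derivWithin xE (Icc a b) t)) *
          deriv η t) = 0 := by
  have hvar := fun i => hasDerivAt_intervalIntegral_variation hab (hf_cont i) (hfy i) (hfv i)
    (hfy_cont i) (hfv_cont i) hxE hη
  simp only [← hF] at hvar
  have hcomp :=
    hasDerivAt_comp_pi (φ := fun ε => F fun t => xE t + ε * η t) (by simpa using hH) hvar
  simp only [zero_mul, add_zero] at hcomp
  have h0 := (isLocalExtr_comp_add_mul hxE hxEb hη hηb hext).hasDerivAt_eq_zero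
    (by simpa only [hL] using hcomp)
  have hp := hxE.continuousOn_derivWithin (uniqueDiffOn_Icc hab) le_rfl
  have hint : ∀ i, IntervalIntegrable (fun t => fderiv ℝ H (F xE) (Pi.single i 1) *
      (fy i t (xE t) (derivWithin xE (Icc a b) t) * η t +
        fv i t (xE t) (derivWithin xE (Icc a b) t) * deriv η t)) volume a b := fun i =>
    ContinuousOn.intervalIntegrable_of_Icc hab.le <| continuousOn_const.mul <|
      (((hfy_cont i).comp_triple continuousOn_id (mapsTo_id _) hxE.continuousOn hp).mul
        hη.continuous.continuousOn).add
      (((hfv_cont i).comp_triple continuousOn_id (mapsTo_id _) hxE.continuousOn hp).mul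
        (hη.continuous_deriv le_rfl).continuousOn)
  rw [← h0]
  simp_rw [← intervalIntegral.integral_const_mul]
  rw [← intervalIntegral.integral_finsetSum fun i _ => hint i]
  simp only [Finset.sum_mul, mul_add, ← Finset.sum_add_distrib, mul_assoc]

theorem eqOn_zero_of_intervalIntegral_sq_eq_zero {a b : ℝ} (hab : a < b) {ψ : ℝ → ℝ}
    (hψ : ContinuousOn ψ (Icc a b)) (h : ∫ t in a..b, ψ t ^ 2 = 0) : EqOn ψ 0 (Icc a b) := by
  have hsq : ContinuousOn (fun t => ψ t ^ 2) (Icc a b) := hψ.pow 2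
  rw [intervalIntegral.integral_eq_zero_iff_of_le_of_nonneg_ae hab.le
    (ae_of_all _ fun t => sq_nonneg (ψ t)) (hsq.intervalIntegrable_of_Icc hab.le),
    Measure.restrict_congr_set Ioc_ae_eq_Icc] at h
  intro t ht
  simpa using Measure.eqOn_Icc_of_ae_eq volume hab.ne h hsq continuousOn_const ht

theorem eqOn_integral_of_integral_mul_add_mul_deriv_eq_zero_of_continuous {a b : ℝ} (hab : a < b)
    {g h : ℝ → ℝ} (hg : Continuous g) (hh : Continuous h)
    (hvar : ∀ η : ℝ → ℝ, ContDiff ℝ 1 η → η b = 0 →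
      ∫ t in a..b, (g t * η t + h t * deriv η t) = 0) :
    EqOn h (fun t => ∫ s in a..t, g s) (Icc a b) := by
  set G := fun t => ∫ s in a..t, g s
  have hG : ∀ t, HasDerivAt G (g t) t := fun t => (hg.integral_hasStrictDerivAt a t).hasDerivAt
  have hGc : Continuous G := continuous_iff_continuousAt.2 fun t => (hG t).continuousAt
  set ψ := fun t => h t - G t
  have hψ : Continuous ψ := hh.sub hGc
  set η := fun t => ∫ s in b..t, ψ s
  have hη : ∀ t, HasDerivAt η (ψ t) t := fun t => (hψ.integral_hasStrictDerivAt b t).hasDerivAt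
  have hη' : deriv η = ψ := funext fun t => (hη t).deriv
  have hηC1 : ContDiff ℝ 1 η :=
    contDiff_one_iff_deriv.2 ⟨fun t => (hη t).differentiableAt, hη' ▸ hψ⟩
  have hparts : ∫ t in a..b, G t * ψ t = -∫ t in a..b, g t * η t := by
    simpa [G, η] using intervalIntegral.integral_mul_deriv_eq_deriv_mul (fun t _ => hG t)
      (fun t _ => hη t) (hg.intervalIntegrable a b) (hψ.intervalIntegrable a b)
  have hsq : ∫ t in a..b, ψ t ^ 2 = 0 := by
    have hint {u v : ℝ → ℝ} (hu : Continuous u) (hv : Continuous v) :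
        IntervalIntegrable (fun t => u t * v t) volume a b :=
      (hu.mul hv).intervalIntegrable a b
    calc ∫ t in a..b, ψ t ^ 2 = ∫ t in a..b, (h t * ψ t - G t * ψ t) :=
          intervalIntegral.integral_congr fun t _ => by ring
      _ = ∫ t in a..b, (g t * η t + h t * deriv η t) := by
          rw [intervalIntegral.integral_sub (hint hh hψ) (hint hGc hψ), hparts, hη',
            intervalIntegral.integral_add (hint hg (hηC1.continuous)) (hint hh hψ)]
          ring
      _ = 0 := hvar η hηC1 intervalIntegral.integral_same
  intro t ht
  simpa [ψ, sub_eq_zero] using eqOn_zero_of_intervalIntegral_sq_eq_zero hab hψ.continuousOn hsq ht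

theorem eqOn_integral_of_integral_mul_add_mul_deriv_eq_zero {a b : ℝ} (hab : a < b)
    {g h : ℝ → ℝ} (hg : ContinuousOn g (Icc a b)) (hh : ContinuousOn h (Icc a b))
    (hvar : ∀ η : ℝ → ℝ, ContDiff ℝ 1 η → η b = 0 →
      ∫ t in a..b, (g t * η t + h t * deriv η t) = 0) :
    EqOn h (fun t => ∫ s in a..t, g s) (Icc a b) := by
  have hπ : ∀ t ∈ Icc a b, (projIcc a b hab.le t : ℝ) = t := fun t ht =>
    congrArg Subtype.val (projIcc_of_mem hab.le ht)
  have hext {u : ℝ → ℝ} (hu : ContinuousOn u (Icc a b)) :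
      Continuous fun t => u (projIcc a b hab.le t) :=
    hu.comp_continuous (continuous_subtype_val.comp continuous_projIcc) fun t =>
      (projIcc a b hab.le t).2
  have hsub : ∀ t ∈ Icc a b, uIcc a t ⊆ Icc a b := fun t ht =>
    (uIcc_of_le ht.1).symm ▸ Icc_subset_Icc_right ht.2
  have key := eqOn_integral_of_integral_mul_add_mul_deriv_eq_zero_of_continuous hab (hext hg)
    (hext hh) fun η hη hηb => by
      rw [← hvar η hη hηb]
      refine intervalIntegral.integral_congr fun t ht => ?_
      simp only [hπ t (hsub b (right_mem_Icc.2 hab.le) ht)]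
  intro t ht
  simpa [hπ t ht, intervalIntegral.integral_congr fun s hs => congrArg g (hπ s (hsub t ht hs))]
    using key ht

theorem composite_natural_boundary_left_general
    (a b : ℝ) (hab : a < b) (n : ℕ)
    (H : (Fin n → ℝ) → ℝ) (hH : ContDiff ℝ 1 H)
    (f fy fv : Fin n → ℝ → ℝ → ℝ → ℝ)
    (hf_cont : ∀ i, ContinuousOn (fun p : ℝ × ℝ × ℝ => f i p.1 p.2.1 p.2.2)
      (Set.Icc a b ×ˢ (Set.univ : Set ℝ) ×ˢ (Set.univ : Set ℝ)))
    (hfy : ∀ i, ∀ t ∈ Set.Icc a b, ∀ y v : ℝ,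
      HasDerivAt (fun y' => f i t y' v) (fy i t y v) y)
    (hfv : ∀ i, ∀ t ∈ Set.Icc a b, ∀ y v : ℝ,
      HasDerivAt (fun v' => f i t y v') (fv i t y v) v)
    (hfy_cont : ∀ i, ContinuousOn (fun p : ℝ × ℝ × ℝ => fy i p.1 p.2.1 p.2.2)
      (Set.Icc a b ×ˢ (Set.univ : Set ℝ) ×ˢ (Set.univ : Set ℝ)))
    (hfv_cont : ∀ i, ContinuousOn (fun p : ℝ × ℝ × ℝ => fv i p.1 p.2.1 p.2.2)
      (Set.Icc a b ×ˢ (Set.univ : Set ℝ) ×ˢ (Set.univ : Set ℝ)))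
    (xb : ℝ) (xE : ℝ → ℝ)
    (hxE : ContDiffOn ℝ 1 xE (Set.Icc a b))
    (hxEb : xE b = xb)
    (F : (ℝ → ℝ) → Fin n → ℝ)
    (hF : ∀ x i, F x i = ∫ t in a..b, f i t (x t) (derivWithin x (Set.Icc a b) t))
    (L : (ℝ → ℝ) → ℝ)
    (hL : ∀ x, L x = H (F x))
    (hext :
      (∃ δ > 0, ∀ x : ℝ → ℝ, ContDiffOn ℝ 1 x (Set.Icc a b) →
        x b = xb → C1Norm a b (fun t => x t - xE t) < δ → L xE ≤ L x) ∨
      (∃ δ > 0, ∀ x : ℝ → ℝ, ContDiffOn ℝ 1 x (Set.Icc a b) →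
        x b = xb → C1Norm a b (fun t => x t - xE t) < δ → L x ≤ L xE)) :
    ∑ i, fderiv ℝ H (F xE) (Pi.single i 1) *
      fv i a (xE a) (derivWithin xE (Set.Icc a b) a) = 0 := by
  have hp := hxE.continuousOn_derivWithin (uniqueDiffOn_Icc hab) le_rfl
  have hcoeff {φ : Fin n → ℝ → ℝ → ℝ → ℝ}
      (hφ : ∀ i, ContinuousOn (fun p : ℝ × ℝ × ℝ => φ i p.1 p.2.1 p.2.2)
        (Icc a b ×ˢ univ ×ˢ univ)) :
      ContinuousOn (fun t => ∑ i, fderiv ℝ H (F xE) (Pi.single i 1) *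
        φ i t (xE t) (derivWithin xE (Icc a b) t)) (Icc a b) :=
    continuousOn_finsetSum _ fun i _ => continuousOn_const.mul
      ((hφ i).comp_triple continuousOn_id (mapsTo_id _) hxE.continuousOn hp)
  have hboundary := eqOn_integral_of_integral_mul_add_mul_deriv_eq_zero hab (hcoeff hfy_cont)
    (hcoeff hfv_cont) fun η hη hηb => integral_first_variation_eq_zero hab hf_cont hfy
      hfv hfy_cont hfv_cont hxE hxEb hF (hH.differentiable one_ne_zero _) hL hext hη hηb
  simpa using hboundary (left_mem_Icc.2 hab.le)

/-- Natural boundary condition at `a` for the composite functional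
`L[x] = H(F₁[x], …, F_n[x])` when `x(a)` is free and `x(b) = x_b` is fixed. -/
theorem composite_natural_boundary_left
    (a b : ℝ) (hab : a < b) (n : ℕ) (hn : 1 ≤ n)
    (H : (Fin n → ℝ) → ℝ) (hH : ContDiff ℝ 1 H)
    (f fy fv : Fin n → ℝ → ℝ → ℝ → ℝ)
    (hf_cont : ∀ i, ContinuousOn (fun p : ℝ × ℝ × ℝ => f i p.1 p.2.1 p.2.2)
      (Set.Icc a b ×ˢ (Set.univ : Set ℝ) ×ˢ (Set.univ : Set ℝ)))
    (hfy : ∀ i, ∀ t ∈ Set.Icc a b, ∀ y v : ℝ,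
      HasDerivAt (fun y' => f i t y' v) (fy i t y v) y)
    (hfv : ∀ i, ∀ t ∈ Set.Icc a b, ∀ y v : ℝ,
      HasDerivAt (fun v' => f i t y v') (fv i t y v) v)
    (hfy_cont : ∀ i, ContinuousOn (fun p : ℝ × ℝ × ℝ => fy i p.1 p.2.1 p.2.2)
      (Set.Icc a b ×ˢ (Set.univ : Set ℝ) ×ˢ (Set.univ : Set ℝ)))
    (hfv_cont : ∀ i, ContinuousOn (fun p : ℝ × ℝ × ℝ => fv i p.1 p.2.1 p.2.2)
      (Set.Icc a b ×ˢ (Set.univ : Set ℝ) ×ˢ (Set.univ : Set ℝ)))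
    (xb : ℝ) (xE : ℝ → ℝ)
    (hxE : ContDiffOn ℝ 1 xE (Set.Icc a b))
    (hxEb : xE b = xb)
    (F : (ℝ → ℝ) → Fin n → ℝ)
    (hF : ∀ x i, F x i = ∫ t in a..b, f i t (x t) (derivWithin x (Set.Icc a b) t))
    (L : (ℝ → ℝ) → ℝ)
    (hL : ∀ x, L x = H (F x))
    (hext :
      (∃ δ > 0, ∀ x : ℝ → ℝ, ContDiffOn ℝ 1 x (Set.Icc a b) →
        x b = xb → C1Norm a b (fun t => x t - xE t) < δ → L xE ≤ L x) ∨
      (∃ δ > 0, ∀ x : ℝ → ℝ, ContDiffOn ℝ 1 x (Set.Icc a b) →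
        x b = xb → C1Norm a b (fun t => x t - xE t) < δ → L x ≤ L xE)) :
    ∑ i, fderiv ℝ H (F xE) (Pi.single i 1) *
      fv i a (xE a) (derivWithin xE (Set.Icc a b) a) = 0 :=
  composite_natural_boundary_left_general a b hab n H hH f fy fv hf_cont hfy hfv hfy_cont hfv_cont
    xb xE hxE hxEb F hF L hL hext
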